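/- If a finite connected graph G of metric dimension at most k contains the n-dimensional hypercube Q_n as a subgraph, then 2^n ≤ (n+1)^k. -/

import Mathlib

open SimpleGraph

/-- `S` is a resolving set for `G`: any two distinct vertices are distinguished
by their graph distance to some landmark in `S`. -/
def IsResolvingSet {V : Type*} (G : SimpleGraph V) (S : Set V) : Prop :=
  ∀ u v : V, u ≠ v → ∃ w ∈ S, G.dist u w ≠ G.dist v w

/-- The metric dimension of `G`: the least size of a (finite) resolving set. -/
noncomputable def metricDim {V : Type*} (G : SimpleGraph V) : ℕ :=
  sInf {k | ∃ S : Finset V, IsResolvingSet G ↑S ∧ S.card = k}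

/-- Distance from an edge `e = {u,v}` to a vertex `w`: `min (d(u,w)) (d(v,w))`. -/
noncomputable def edgeDist {V : Type*} (G : SimpleGraph V) (e : Sym2 V) (w : V) : ℕ :=
  Sym2.lift ⟨fun u v => min (G.dist u w) (G.dist v w), fun u v => by simp [min_comm]⟩ e

/-- `S` is an edge resolving set for `G`: any two distinct edges are distinguished
by their distance to some landmark in `S`. -/
def IsEdgeResolvingSet {V : Type*} (G : SimpleGraph V) (S : Set V) : Prop :=
  ∀ e ∈ G.edgeSet, ∀ f ∈ G.edgeSet, e ≠ f → ∃ w ∈ S, edgeDist G e w ≠ edgeDist G f w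

/-- The edge metric dimension of `G`: the least size of a (finite) edge resolving set. -/
noncomputable def edgeMetricDim {V : Type*} (G : SimpleGraph V) : ℕ :=
  sInf {k | ∃ S : Finset V, IsEdgeResolvingSet G ↑S ∧ S.card = k}

/-- `G` contains `H` as a subgraph: there is an injective graph homomorphism `H → G`. -/
def Contains {V W : Type*} (G : SimpleGraph V) (H : SimpleGraph W) : Prop :=
  ∃ f : H →g G, Function.Injective f

/-- The graph `D_k` on `ℤ_{≥0}^k`: distinct points are adjacent iff they differ
by at most 1 in every coordinate. -/
def Dgraph (k : ℕ) : SimpleGraph (Fin k → ℕ) where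
  Adj x y := x ≠ y ∧ ∀ i, x i ≤ y i + 1 ∧ y i ≤ x i + 1
  symm := ⟨fun _x _y h => ⟨h.1.symm, fun i => ⟨(h.2 i).2, (h.2 i).1⟩⟩⟩
  loopless := ⟨fun _x h => h.1 rfl⟩

/-- The `n`-dimensional hypercube `Q_n` on vertex set `{0,1}^n`: two vertices are
adjacent iff they differ in exactly one coordinate. -/
def hypercubeGraph (n : ℕ) : SimpleGraph (Fin n → Fin 2) where
  Adj x y := ∃! i, x i ≠ y i
  symm := by
    constructor
    rintro x y ⟨i, hi, hu⟩
    exact ⟨i, hi.symm, fun j hj => hu j hj.symm⟩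
  loopless := by
    constructor
    rintro x ⟨i, hi, _⟩
    exact hi rfl

/-! Fix a resolving set `S` of size `dim G`. The embedded cube has diameter at most `n` in `G`,
so for each landmark `w ∈ S` the distances from the cube's vertices to `w` take at most `n + 1`
consecutive values. Since `S` resolves `G`, distinct cube vertices have distinct distance vectors,
whence `2 ^ n ≤ (n + 1) ^ |S|`. -/

section

variable {V : Type*} {G : SimpleGraph V}

theorem isResolvingSet_univ (hG : G.Connected) : IsResolvingSet G Set.univ := fun u v huv =>
  ⟨u, Set.mem_univ u, by
    rw [dist_self]
    exact fun h => huv (hG.dist_eq_zero_iff.mp h.symm).symm⟩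

theorem exists_isResolvingSet_card_eq_metricDim [Fintype V] (hG : G.Connected) :
    ∃ S : Finset V, IsResolvingSet G S ∧ S.card = metricDim G :=
  Nat.sInf_mem (s := {k | ∃ S : Finset V, IsResolvingSet G ↑S ∧ S.card = k})
    ⟨_, Finset.univ, by simpa using isResolvingSet_univ hG, rfl⟩

theorem IsResolvingSet.card_le_of_dist_le (hG : G.Connected) {S : Finset V}
    (hS : IsResolvingSet G S) {A : Finset V} {D : ℕ}
    (hA : ∀ u ∈ A, ∀ v ∈ A, G.dist u v ≤ D) : A.card ≤ (D + 1) ^ S.card := by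
  classical
  rcases A.eq_empty_or_nonempty with rfl | hA₀
  · simp
  let m (w : V) : ℕ := A.inf' hA₀ (G.dist · w)
  have min_le_dist (w : V) {u : V} (hu : u ∈ A) : m w ≤ G.dist u w := Finset.inf'_le _ hu
  have dist_le_min_add (w : V) {u : V} (hu : u ∈ A) : G.dist u w ≤ m w + D := by
    obtain ⟨v, hv, hvm⟩ := A.exists_mem_eq_inf' hA₀ (G.dist · w)
    have := hG.dist_triangle (u := u) (v := v) (w := w)
    have := hA u hu v hv
    simp only [m, hvm]
    omega
  let profile (u : V) (w : S) : ℕ := G.dist u w - m w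
  calc A.card ≤ (Fintype.piFinset fun _ : S => Finset.range (D + 1)).card := by
        refine Finset.card_le_card_of_injOn profile (fun u hu => ?_) (fun u hu v hv huv => ?_)
        · simp only [Finset.mem_coe, Fintype.mem_piFinset, Finset.mem_range]
          intro w
          show G.dist u w - m w < D + 1
          have := dist_le_min_add w hu
          omega
        · by_contra hne
          obtain ⟨w, hw, hd⟩ := hS u v hne
          have : G.dist u w - m w = G.dist v w - m w := congrFun huv ⟨w, hw⟩
          have := min_le_dist w hu
          have := min_le_dist w hv
          omega
    _ = (D + 1) ^ S.card := by simp

theorem hypercubeGraph_adj_update {n : ℕ} {x : Fin n → Fin 2} {i : Fin n} {b : Fin 2}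
    (h : x i ≠ b) : (hypercubeGraph n).Adj x (Function.update x i b) :=
  ⟨i, by simpa using h, fun j hj => by
    by_contra hji
    simp [Function.update_of_ne hji] at hj⟩

theorem hypercubeGraph_exists_walk_length_le {n : ℕ} (s : Finset (Fin n))
    (x y : Fin n → Fin 2) (h : ∀ i, x i ≠ y i → i ∈ s) :
    ∃ p : (hypercubeGraph n).Walk x y, p.length ≤ s.card := by
  induction s using Finset.induction_on generalizing x with
  | empty =>
    obtain rfl : x = y := funext fun i => by_contra fun hi => by simpa using h i hi
    exact ⟨.nil, le_rfl⟩
  | @insert a s ha ih =>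
    let x' := Function.update x a (y a)
    obtain ⟨p, hp⟩ := ih x' fun i hi => by
      rcases eq_or_ne i a with rfl | hia
      · simp [x'] at hi
      · simpa [hia, x', Function.update_of_ne hia] using h i (by simpa [x', hia] using hi)
    rw [Finset.card_insert_of_notMem ha]
    by_cases hxa : x a = y a
    · exact ⟨p.copy (by simp [x', ← hxa]) rfl, by simpa using hp.trans (Nat.le_succ _)⟩
    · exact ⟨.cons (hypercubeGraph_adj_update hxa) p, by simp [hp]⟩

theorem dist_map_hypercubeGraph_le {n : ℕ} (f : hypercubeGraph n →g G) (x y : Fin n → Fin 2) :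
    G.dist (f x) (f y) ≤ n := by
  obtain ⟨p, hp⟩ := hypercubeGraph_exists_walk_length_le Finset.univ x y (by simp)
  calc G.dist (f x) (f y) ≤ (p.map f).length := dist_le _
    _ ≤ n := by simpa using hp

end

/-- if a finite connected graph of metric dimension at most `k`
contains `Q_n` as a subgraph then `2^n ≤ (n+1)^k`. -/
theorem statement13 {V : Type*} [Fintype V] (G : SimpleGraph V) (hG : G.Connected)
    (k n : ℕ) (hdim : metricDim G ≤ k) (hcont : Contains G (hypercubeGraph n)) :
    2 ^ n ≤ (n + 1) ^ k := by
  obtain ⟨f, hf⟩ := hcont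
  obtain ⟨S, hS, hcard⟩ := exists_isResolvingSet_card_eq_metricDim hG
  have hcube := hS.card_le_of_dist_le hG (A := Finset.univ.map ⟨f, hf⟩) (D := n) (by
    simp only [Finset.mem_map, Finset.mem_univ, true_and]
    rintro _ ⟨x, rfl⟩ _ ⟨y, rfl⟩
    exact dist_map_hypercubeGraph_le f x y)
  calc 2 ^ n = (Finset.univ.map ⟨f, hf⟩).card := by simp
    _ ≤ (n + 1) ^ S.card := hcube
    _ ≤ (n + 1) ^ k := Nat.pow_le_pow_right n.succ_pos (hcard ▸ hdim)
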